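/- Let E be a Polish space, K = L^2([0,T]; l^2), and Γ^0 : K → E continuous from the weak topology of K restricted to each ball S_N to E. Define I : E → [0,∞] by I(g) = inf{ (1/2)∫_0^T ‖k(s)‖²_{l²} ds : k ∈ K, Γ^0(k) = g } (with inf ∅ = ∞). Then I is a rate function: for each M < ∞, the level set {g ∈ E : I(g) ≤ M} is compact in E. -/

import Mathlib

open MeasureTheory Filter Topology
open MeasureTheory Filter Topology

/-- Weak sequential compactness of bounded sequences in a separable real Hilbert space. -/
lemma exists_weak_limit {H : Type*} [NormedAddCommGroup H] [InnerProductSpace ℝ H]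
    [CompleteSpace H] [SecondCountableTopology H] {C : ℝ} (hC : 0 ≤ C)
    (k : ℕ → H) (hk : ∀ j, ‖k j‖ ≤ C) :
    ∃ φ : ℕ → ℕ, StrictMono φ ∧ ∃ x : H,
      ∀ ψ : H, Tendsto (fun j => (inner ℝ (k (φ j)) ψ : ℝ)) atTop (𝓝 (inner ℝ x ψ)) := by
  haveI : Nonempty H := ⟨0⟩
  set e : ℕ → H := TopologicalSpace.denseSeq H with he
  have hdense : DenseRange e := TopologicalSpace.denseRange_denseSeq H
  -- the coordinate map into a compact product
  set F : ℕ → (ℕ → ℝ) := fun j i => (inner ℝ (k j) (e i) : ℝ) with hF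
  have hScpt : IsCompact (Set.pi Set.univ fun i => Set.Icc (-(C * ‖e i‖)) (C * ‖e i‖)) :=
    isCompact_univ_pi fun i => isCompact_Icc
  have hmem : ∀ j, F j ∈ Set.pi Set.univ fun i => Set.Icc (-(C * ‖e i‖)) (C * ‖e i‖) := by
    intro j i _
    have h1 : |(inner ℝ (k j) (e i) : ℝ)| ≤ ‖k j‖ * ‖e i‖ := abs_real_inner_le_norm _ _
    have h2 : ‖k j‖ * ‖e i‖ ≤ C * ‖e i‖ :=
      mul_le_mul_of_nonneg_right (hk j) (norm_nonneg _)
    constructor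
    · nlinarith [abs_nonneg (inner ℝ (k j) (e i) : ℝ), neg_abs_le (inner ℝ (k j) (e i) : ℝ)]
    · exact le_trans (le_abs_self _) (h1.trans h2)
  obtain ⟨f, -, φ, hφ, hFf⟩ := hScpt.tendsto_subseq hmem
  refine ⟨φ, hφ, ?_⟩
  have hcoord : ∀ i, Tendsto (fun j => (inner ℝ (k (φ j)) (e i) : ℝ)) atTop (𝓝 (f i)) := by
    intro i
    exact (continuous_apply i).continuousAt.tendsto.comp hFf
  -- each ⟪k (φ j), ψ⟫ is Cauchy
  have hCauchy : ∀ ψ : H, CauchySeq fun j => (inner ℝ (k (φ j)) ψ : ℝ) := by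
    intro ψ
    rw [Metric.cauchySeq_iff]
    intro ε hε
    obtain ⟨i, hi⟩ := Metric.denseRange_iff.mp hdense ψ (ε / (4 * (C + 1))) (by positivity)
    have hc : CauchySeq fun j => (inner ℝ (k (φ j)) (e i) : ℝ) := (hcoord i).cauchySeq
    obtain ⟨N, hN⟩ := Metric.cauchySeq_iff.mp hc (ε / 2) (by positivity)
    refine ⟨N, fun m hm n hn => ?_⟩
    have key : ∀ a b : H, ‖a‖ ≤ C → ‖b‖ ≤ C →
        dist ((inner ℝ a (e i) : ℝ)) ((inner ℝ b (e i) : ℝ)) < ε / 2 →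
        dist ((inner ℝ a ψ : ℝ)) ((inner ℝ b ψ : ℝ)) < ε := by
      intro a b ha hb hab
      have hsub : (inner ℝ a ψ : ℝ) - inner ℝ b ψ =
          (inner ℝ (a - b) (ψ - e i) : ℝ) + ((inner ℝ a (e i) : ℝ) - inner ℝ b (e i)) := by
        simp only [inner_sub_left, inner_sub_right]; ring
      have h1 : |(inner ℝ (a - b) (ψ - e i) : ℝ)| ≤ ‖a - b‖ * ‖ψ - e i‖ :=
        abs_real_inner_le_norm _ _
      have h2 : ‖a - b‖ ≤ 2 * C := by
        calc ‖a - b‖ ≤ ‖a‖ + ‖b‖ := norm_sub_le _ _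
        _ ≤ 2 * C := by linarith
      have h3 : ‖ψ - e i‖ < ε / (4 * (C + 1)) := by
        rw [← dist_eq_norm]; exact hi
      have h4 : ‖a - b‖ * ‖ψ - e i‖ ≤ 2 * C * (ε / (4 * (C + 1))) := by
        apply mul_le_mul h2 h3.le (norm_nonneg _) (by positivity)
      have h5 : 2 * C * (ε / (4 * (C + 1))) < ε / 2 := by
        rw [← mul_div_assoc, div_lt_div_iff₀ (by positivity) (by norm_num)]
        nlinarith
      rw [Real.dist_eq] at hab ⊢
      calc |(inner ℝ a ψ : ℝ) - inner ℝ b ψ|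
          ≤ |(inner ℝ (a - b) (ψ - e i) : ℝ)| + |(inner ℝ a (e i) : ℝ) - inner ℝ b (e i)| := by
            rw [hsub]; exact abs_add_le _ _
        _ < ε / 2 + ε / 2 := by
            apply add_lt_add_of_le_of_lt (h1.trans (h4.trans h5.le)) hab
        _ = ε := by ring
    exact key _ _ (hk _) (hk _) (hN m hm n hn)
  have hconv : ∀ ψ : H, ∃ L : ℝ, Tendsto (fun j => (inner ℝ (k (φ j)) ψ : ℝ)) atTop (𝓝 L) :=
    fun ψ => cauchySeq_tendsto_of_complete (hCauchy ψ)
  choose g hg using hconv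
  -- g is linear and bounded
  have hadd : ∀ ψ ψ' : H, g (ψ + ψ') = g ψ + g ψ' := by
    intro ψ ψ'
    refine tendsto_nhds_unique ?_ ((hg ψ).add (hg ψ'))
    simpa [inner_add_right] using hg (ψ + ψ')
  have hsmul : ∀ (c : ℝ) (ψ : H), g (c • ψ) = c * g ψ := by
    intro c ψ
    refine tendsto_nhds_unique ?_ ((hg ψ).const_mul c)
    simpa [real_inner_smul_right] using hg (c • ψ)
  have hbound : ∀ ψ : H, ‖g ψ‖ ≤ C * ‖ψ‖ := by
    intro ψ
    rw [Real.norm_eq_abs]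
    refine le_of_tendsto (hg ψ).abs (Filter.Eventually.of_forall fun j => ?_)
    calc |(inner ℝ (k (φ j)) ψ : ℝ)| ≤ ‖k (φ j)‖ * ‖ψ‖ := abs_real_inner_le_norm _ _
      _ ≤ C * ‖ψ‖ := mul_le_mul_of_nonneg_right (hk _) (norm_nonneg _)
  let L : H →L[ℝ] ℝ := LinearMap.mkContinuous
    { toFun := g, map_add' := hadd, map_smul' := hsmul } C hbound
  refine ⟨(InnerProductSpace.toDual ℝ H).symm L, fun ψ => ?_⟩
  have : (inner ℝ ((InnerProductSpace.toDual ℝ H).symm L) ψ : ℝ) = L ψ := by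
    rw [← InnerProductSpace.toDual_apply_apply, LinearIsometryEquiv.apply_symm_apply]
  rw [this]
  exact hg ψ

noncomputable abbrev ell2 : Type := lp (fun _ : ℕ => ℝ) 2

noncomputable abbrev Kspace (T : ℝ) : Type :=
  Lp ell2 2 (volume.restrict (Set.Icc (0:ℝ) T))

instance ell2_separable : TopologicalSpace.SeparableSpace ell2 := by
  rw [← TopologicalSpace.isSeparable_univ_iff]
  have hs : TopologicalSpace.IsSeparable
      (closure (Submodule.span ℝ (Set.range fun i : ℕ => lp.single 2 i (1:ℝ)) : Set ell2)) :=
    ((Set.countable_range _).isSeparable.span).closure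
  refine hs.mono fun f _ => ?_
  have h1 : HasSum (fun i : ℕ => lp.single 2 i (f i)) f :=
    lp.hasSum_single ENNReal.ofNat_ne_top f
  refine mem_closure_of_tendsto h1 (Filter.Eventually.of_forall fun s => ?_)
  refine Submodule.sum_mem _ fun i _ => ?_
  have : lp.single (E := fun _ : ℕ => ℝ) 2 i (f i) = f i • lp.single 2 i (1:ℝ) := by
    rw [← lp.single_smul]; norm_num
  rw [this]
  exact Submodule.smul_mem _ _ (Submodule.subset_span ⟨i, rfl⟩)

instance fact_two_ne_top : Fact ((2:ENNReal) ≠ ⊤) := ⟨ENNReal.ofNat_ne_top⟩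

/-- If `Γ⁰ : K → E` is continuous from the weak topology of `K = L²([0,T]; l²)` restricted
to each ball `S_N` into the Polish space `E`, then
`I(g) = inf{(1/2)‖k‖² : Γ⁰(k) = g}` (with `inf ∅ = ∞`) is a rate function: each level set
`{I ≤ M}` is compact. -/
theorem rate_function_good (T : ℝ) (hT : 0 < T)
    {E : Type*} [MetricSpace E] [CompleteSpace E] [TopologicalSpace.SeparableSpace E]
    (Γ0 : Kspace T → E)
    (hcont : ∀ N > (0:ℝ), ∀ (kseq : ℕ → Kspace T) (k : Kspace T),
      (∀ n, ‖kseq n‖ ^ 2 ≤ N) →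
      (∀ φ : Kspace T,
        Tendsto (fun n => (inner ℝ (kseq n) φ : ℝ)) atTop (𝓝 (inner ℝ k φ))) →
      Tendsto (fun n => Γ0 (kseq n)) atTop (𝓝 (Γ0 k))) :
    ∀ M : ℝ, 0 ≤ M →
      IsCompact {g : E |
        (⨅ k : {k : Kspace T // Γ0 k = g}, ENNReal.ofReal ((1/2) * ‖(k : Kspace T)‖ ^ 2))
          ≤ ENNReal.ofReal M} := by
  intro M hM
  apply IsSeqCompact.isCompact
  intro x hx
  -- choose near-optimal preimages
  have hsel : ∀ n : ℕ, ∃ k : Kspace T, Γ0 k = x n ∧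
      (1/2 : ℝ) * ‖k‖ ^ 2 < M + 1 / (n + 1) := by
    intro n
    have hpos : (0:ℝ) < M + 1 / (n + 1) := by positivity
    have h1 : (⨅ k : {k : Kspace T // Γ0 k = x n},
        ENNReal.ofReal ((1/2) * ‖(k : Kspace T)‖ ^ 2)) < ENNReal.ofReal (M + 1 / (n + 1)) := by
      refine lt_of_le_of_lt (hx n) ?_
      refine (ENNReal.ofReal_lt_ofReal_iff hpos).mpr ?_
      have : (0:ℝ) < 1 / (n + 1) := by positivity
      linarith
    rw [iInf_lt_iff] at h1
    obtain ⟨⟨k, hk⟩, hlt⟩ := h1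
    refine ⟨k, hk, ?_⟩
    have := (ENNReal.ofReal_lt_ofReal_iff hpos).mp
      (lt_of_le_of_lt (ENNReal.ofReal_le_ofReal le_rfl) hlt)
    exact this
  choose k hΓ hb using hsel
  have hb2 : ∀ n, ‖k n‖ ^ 2 ≤ 2 * M + 2 := by
    intro n
    have h1 : 1 / ((n:ℝ) + 1) ≤ 1 := by
      rw [div_le_one (by positivity)]; linarith [Nat.cast_nonneg (α := ℝ) n]
    nlinarith [hb n]
  have hkC : ∀ n, ‖k n‖ ≤ Real.sqrt (2 * M + 2) := by
    intro n
    have := Real.sqrt_le_sqrt (hb2 n)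
    rwa [Real.sqrt_sq (norm_nonneg _)] at this
  obtain ⟨φ, hφ, x₀, hweak⟩ :=
    exists_weak_limit (Real.sqrt_nonneg (2 * M + 2)) k hkC
  have hN : ∀ n, ‖k (φ n)‖ ^ 2 ≤ 2 * M + 2 := fun n => hb2 (φ n)
  have hΓconv : Tendsto (fun n => Γ0 (k (φ n))) atTop (𝓝 (Γ0 x₀)) :=
    hcont (2 * M + 2) (by linarith) (fun n => k (φ n)) x₀ hN hweak
  -- norm bound on the weak limit
  have hx₀ : ‖x₀‖ ^ 2 ≤ 2 * M := by
    have h1 : Tendsto (fun j => (inner ℝ (k (φ j)) x₀ : ℝ)) atTop (𝓝 (‖x₀‖ ^ 2)) := by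
      have := hweak x₀
      rwa [real_inner_self_eq_norm_sq] at this
    have htend : Tendsto (fun j : ℕ => Real.sqrt (2 * (M + 1 / (φ j + 1))) * ‖x₀‖)
        atTop (𝓝 (Real.sqrt (2 * M) * ‖x₀‖)) := by
      have h0 : Tendsto (fun j : ℕ => 1 / ((φ j : ℝ) + 1)) atTop (𝓝 0) := by
        apply Tendsto.comp tendsto_one_div_add_atTop_nhds_zero_nat
        exact hφ.tendsto_atTop
      have h2 : Tendsto (fun j : ℕ => 2 * (M + 1 / ((φ j : ℝ) + 1))) atTop (𝓝 (2 * M)) := by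
        have hMadd : Tendsto (fun j : ℕ => M + 1 / ((φ j : ℝ) + 1)) atTop (𝓝 (M + 0)) :=
          (tendsto_const_nhds : Tendsto (fun _ : ℕ => M) atTop (𝓝 M)).add h0
        rw [add_zero] at hMadd
        exact hMadd.const_mul 2
      exact ((Real.continuous_sqrt.tendsto _).comp h2).mul tendsto_const_nhds
    have hle : ∀ j : ℕ, (inner ℝ (k (φ j)) x₀ : ℝ) ≤
        Real.sqrt (2 * (M + 1 / (φ j + 1))) * ‖x₀‖ := by
      intro j
      have hk₁ : ‖k (φ j)‖ ≤ Real.sqrt (2 * (M + 1 / (φ j + 1))) := by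
        have h1 : ‖k (φ j)‖ ^ 2 ≤ 2 * (M + 1 / (φ j + 1)) := by nlinarith [hb (φ j)]
        have := Real.sqrt_le_sqrt h1
        rwa [Real.sqrt_sq (norm_nonneg _)] at this
      calc (inner ℝ (k (φ j)) x₀ : ℝ) ≤ ‖k (φ j)‖ * ‖x₀‖ := real_inner_le_norm _ _
        _ ≤ Real.sqrt (2 * (M + 1 / (φ j + 1))) * ‖x₀‖ :=
            mul_le_mul_of_nonneg_right hk₁ (norm_nonneg _)
    have hfin : ‖x₀‖ ^ 2 ≤ Real.sqrt (2 * M) * ‖x₀‖ :=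
      le_of_tendsto_of_tendsto' h1 htend hle
    rcases eq_or_lt_of_le (norm_nonneg x₀) with h | h
    · rw [← h]; norm_num; linarith
    · have h2 : ‖x₀‖ ≤ Real.sqrt (2 * M) := by
        have := mul_le_mul_of_nonneg_right (le_refl (‖x₀‖ : ℝ)) (le_of_lt h)
        nlinarith [hfin, sq_nonneg (‖x₀‖ - Real.sqrt (2 * M))]
      have h3 : ‖x₀‖ ^ 2 ≤ Real.sqrt (2 * M) ^ 2 := by nlinarith [Real.sqrt_nonneg (2 * M)]
      rwa [Real.sq_sqrt (by linarith : (0:ℝ) ≤ 2 * M)] at h3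
  refine ⟨Γ0 x₀, ?_, φ, hφ, ?_⟩
  · refine le_trans (iInf_le (fun k : {k : Kspace T // Γ0 k = Γ0 x₀} =>
        ENNReal.ofReal ((1/2) * ‖(k : Kspace T)‖ ^ 2)) ⟨x₀, rfl⟩) ?_
    exact ENNReal.ofReal_le_ofReal (by nlinarith)
  · have : (fun n => Γ0 (k (φ n))) = x ∘ φ := by
      funext n; rw [hΓ (φ n)]; rfl
    rwa [this] at hΓconv
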